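/- arXiv:2108.08645 — 4 statements merged into one kernel-verified Lean document; each statement's English description precedes it below -/
import Mathlib

section
/- Let n be a positive integer and let f : ℤⁿ → ℤ be a function satisfying f(k·x) = |k|·f(x) for all k ∈ ℤ and x ∈ ℤⁿ, and f(x + y) ≤ f(x) + f(y) for all x, y ∈ ℤⁿ. Then there exists a seminorm p on ℝⁿ such that p(x) = f(x) for every x ∈ ℤⁿ (where ℤⁿ is regarded as a subset of ℝⁿ via the coordinatewise inclusion ℤ ⊂ ℝ). -/
/-!
Let `N` be a seminorm dominating `f` on the lattice (`N = C‖·‖∞` with `C = ∑ᵢ f(eᵢ)` works).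
Extend `f` to the rational points `z / m` by homogeneity and take its infimal convolution with `N`:
`p x = inf_{m ≥ 1, z} (f z + N (m • x - z)) / m`.
Subadditivity of `f` and `N` makes `p` subadditive, and `f ≤ N` on the lattice gives `p = f` there.
Reindexing the infimum shows `p (k • x) = |k| * p x` for integers `k`; since `p` is `N`-Lipschitz,
it is continuous along lines, so this extends to real scalars by density of `ℚ`.
-/

variable {Λ V : Type*} [AddCommGroup Λ] [AddCommGroup V] [Module ℝ V]

theorem apply_smul_eq_abs_mul_of_intCast_smul {p : V → ℝ}
    (hint : ∀ (k : ℤ) (x : V), p ((k : ℝ) • x) = |(k : ℝ)| * p x)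
    (hcont : ∀ x, Continuous fun a : ℝ => p (a • x)) (a : ℝ) (x : V) :
    p (a • x) = |a| * p x := by
  have hrat : ∀ q : ℚ, p ((q : ℝ) • x) = |(q : ℝ)| * p x := by
    intro q
    have hden : (0 : ℝ) < q.den := by positivity
    have hnum : ((q.den : ℤ) : ℝ) • (q : ℝ) • x = (q.num : ℝ) • x := by
      have h : ((q.den : ℤ) : ℝ) * q = q.num := by exact_mod_cast Rat.den_mul_eq_num q
      rw [smul_smul, h]
    have key := hint q.den ((q : ℝ) • x)
    rw [hnum, hint, Int.cast_natCast, abs_of_pos hden] at key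
    have habs : |(q : ℝ)| = |(q.num : ℝ)| / q.den := by rw [Rat.cast_def, abs_div, Nat.abs_cast]
    rw [habs, div_mul_eq_mul_div, eq_div_iff hden.ne', mul_comm, key]
  exact congrFun (Rat.denseRange_cast.equalizer (hcont x) (continuous_abs.mul continuous_const)
    (funext hrat)) a

structure IsIntSeminorm (f : Λ → ℝ) : Prop where
  map_zsmul : ∀ (k : ℤ) (z : Λ), f (k • z) = |(k : ℝ)| * f z
  map_add_le : ∀ z w, f (z + w) ≤ f z + f w

namespace IsIntSeminorm

variable {f : Λ → ℝ} (hf : IsIntSeminorm f)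
include hf

theorem map_zero : f 0 = 0 := by
  simpa using hf.map_zsmul 0 0

theorem map_neg (z : Λ) : f (-z) = f z := by
  simpa using hf.map_zsmul (-1) z

theorem nonneg (z : Λ) : 0 ≤ f z := by
  have := hf.map_add_le z (-z)
  rw [add_neg_cancel, hf.map_zero, hf.map_neg] at this
  linarith

theorem map_natCast_smul (s : ℕ) (z : Λ) : f ((s : ℤ) • z) = s * f z := by
  rw [hf.map_zsmul, Int.cast_natCast, Nat.abs_cast]

end IsIntSeminorm

section Extension

variable (φ : Λ →+ V) (N : Seminorm ℝ V) (f : Λ → ℝ)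

noncomputable def latticeExtTerm (x : V) (m : ℕ+) (z : Λ) : ℝ :=
  (f z + N ((m : ℝ) • x - φ z)) / m

noncomputable def latticeExt (x : V) : ℝ :=
  ⨅ q : ℕ+ × Λ, latticeExtTerm φ N f x q.1 q.2

variable {φ N f}

theorem le_latticeExt {c : ℝ} {x : V} (h : ∀ m z, c ≤ latticeExtTerm φ N f x m z) :
    c ≤ latticeExt φ N f x :=
  le_ciInf fun q => h q.1 q.2

theorem latticeExtTerm_le_add (x y : V) (m : ℕ+) (z : Λ) :
    latticeExtTerm φ N f x m z ≤ latticeExtTerm φ N f y m z + N (x - y) := by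
  have hm : (0 : ℝ) < m := Nat.cast_pos.2 m.pos
  have hN : N ((m : ℝ) • x - φ z) ≤ N ((m : ℝ) • y - φ z) + m * N (x - y) := by
    calc N ((m : ℝ) • x - φ z) = N (((m : ℝ) • y - φ z) + (m : ℝ) • (x - y)) := by
          congr 1; module
      _ ≤ N ((m : ℝ) • y - φ z) + m * N (x - y) := by
          grw [map_add_le_add, map_smul_eq_mul, Real.norm_natCast]
  rw [latticeExtTerm, latticeExtTerm, div_add' _ _ _ hm.ne']
  gcongr ?_ / _
  linarith

variable (hf : IsIntSeminorm f)
include hf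

theorem latticeExtTerm_nonneg (x : V) (m : ℕ+) (z : Λ) : 0 ≤ latticeExtTerm φ N f x m z :=
  div_nonneg (add_nonneg (hf.nonneg z) (apply_nonneg N _)) (Nat.cast_pos.2 m.pos).le

theorem latticeExt_le (x : V) (m : ℕ+) (z : Λ) :
    latticeExt φ N f x ≤ latticeExtTerm φ N f x m z := by
  refine ciInf_le ⟨0, Set.forall_mem_range.2 fun q => ?_⟩ (m, z)
  exact latticeExtTerm_nonneg hf x q.1 q.2

theorem latticeExt_nonneg (x : V) : 0 ≤ latticeExt φ N f x :=
  le_latticeExt fun m z => latticeExtTerm_nonneg hf x m z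

theorem latticeExt_apply (hfN : ∀ z, f z ≤ N (φ z)) (z : Λ) : latticeExt φ N f (φ z) = f z := by
  refine le_antisymm ?_ (le_latticeExt fun m w => ?_)
  · exact (latticeExt_le hf (φ z) 1 z).trans_eq (by simp [latticeExtTerm])
  · have hm : (0 : ℝ) < m := Nat.cast_pos.2 m.pos
    have hsplit : f ((m : ℤ) • z) ≤ f w + N (φ ((m : ℤ) • z - w)) := by
      have := hf.map_add_le w ((m : ℤ) • z - w)
      rw [add_sub_cancel] at this
      linarith [hfN ((m : ℤ) • z - w)]
    rw [hf.map_natCast_smul, map_sub, map_zsmul, natCast_zsmul, ← Nat.cast_smul_eq_nsmul ℝ] at hsplit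
    rw [latticeExtTerm, le_div_iff₀ hm, mul_comm]
    exact hsplit

theorem latticeExt_add_le (x y : V) :
    latticeExt φ N f (x + y) ≤ latticeExt φ N f x + latticeExt φ N f y := by
  refine le_ciInf_add_ciInf fun ⟨m, z⟩ ⟨k, w⟩ => ?_
  have hf_le : f ((k : ℤ) • z + (m : ℤ) • w) ≤ k * f z + m * f w := by
    simpa only [hf.map_natCast_smul] using hf.map_add_le ((k : ℤ) • z) ((m : ℤ) • w)
  have hN_le : N (((m : ℝ) * k) • (x + y) - φ ((k : ℤ) • z + (m : ℤ) • w)) ≤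
      k * N ((m : ℝ) • x - φ z) + m * N ((k : ℝ) • y - φ w) := by
    have hsplit : ((m : ℝ) * k) • (x + y) - φ ((k : ℤ) • z + (m : ℤ) • w) =
        (k : ℝ) • ((m : ℝ) • x - φ z) + (m : ℝ) • ((k : ℝ) • y - φ w) := by
      simp only [natCast_zsmul, map_add, map_nsmul, ← Nat.cast_smul_eq_nsmul ℝ]
      module
    rw [hsplit]
    refine (map_add_le_add N _ _).trans_eq ?_
    rw [map_smul_eq_mul, map_smul_eq_mul, Real.norm_natCast, Real.norm_natCast]
  calc latticeExt φ N f (x + y)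
      ≤ latticeExtTerm φ N f (x + y) (m * k) ((k : ℤ) • z + (m : ℤ) • w) := latticeExt_le hf _ _ _
    _ ≤ (k * (f z + N ((m : ℝ) • x - φ z)) + m * (f w + N ((k : ℝ) • y - φ w))) / (m * k) := by
        rw [latticeExtTerm, PNat.mul_coe, Nat.cast_mul]
        gcongr ?_ / _
        linarith
    _ = latticeExtTerm φ N f x m z + latticeExtTerm φ N f y k w := by
        rw [latticeExtTerm, latticeExtTerm]
        field_simp

theorem latticeExt_le_add (x y : V) :
    latticeExt φ N f x ≤ latticeExt φ N f y + N (x - y) := by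
  rw [← sub_le_iff_le_add]
  exact le_latticeExt fun m z =>
    sub_le_iff_le_add.2 ((latticeExt_le hf x m z).trans (latticeExtTerm_le_add x y m z))

theorem continuous_latticeExt_smul (x : V) :
    Continuous fun a : ℝ => latticeExt φ N f (a • x) := by
  refine (LipschitzWith.of_le_add_mul ⟨N x, apply_nonneg N x⟩ fun a b => ?_).continuous
  have h := latticeExt_le_add (φ := φ) (N := N) hf (a • x) (b • x)
  rwa [← sub_smul, map_smul_eq_mul, Real.norm_eq_abs, mul_comm, ← Real.dist_eq] at h

theorem latticeExt_zero : latticeExt φ N f 0 = 0 :=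
  le_antisymm ((latticeExt_le hf 0 1 0).trans_eq (by simp [latticeExtTerm, hf.map_zero]))
    (latticeExt_nonneg hf 0)

theorem latticeExt_neg (x : V) : latticeExt φ N f (-x) = latticeExt φ N f x := by
  have hterm (m : ℕ+) (z : Λ) :
      latticeExtTerm φ N f (-x) m (-z) = latticeExtTerm φ N f x m z := by
    rw [latticeExtTerm, latticeExtTerm, hf.map_neg, map_neg,
      show (m : ℝ) • -x - -φ z = -((m : ℝ) • x - φ z) by module, map_neg_eq_map]
  rw [latticeExt, ← (Equiv.prodCongr (Equiv.refl ℕ+) (Equiv.neg Λ)).iInf_comp]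
  exact iInf_congr fun q => hterm q.1 q.2

theorem latticeExt_pnat_smul (s : ℕ+) (x : V) :
    latticeExt φ N f ((s : ℝ) • x) = s * latticeExt φ N f x := by
  have hs : (0 : ℝ) < s := Nat.cast_pos.2 s.pos
  have hterm_smul (m : ℕ+) (z : Λ) :
      latticeExtTerm φ N f ((s : ℝ) • x) m ((s : ℤ) • z) = s * latticeExtTerm φ N f x m z := by
    rw [latticeExtTerm, latticeExtTerm, hf.map_natCast_smul, map_zsmul, natCast_zsmul,
      ← Nat.cast_smul_eq_nsmul ℝ,
      show (m : ℝ) • (s : ℝ) • x - (s : ℝ) • φ z = (s : ℝ) • ((m : ℝ) • x - φ z) by module,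
      map_smul_eq_mul, Real.norm_natCast]
    ring
  have hterm_mul (m : ℕ+) (z : Λ) :
      latticeExtTerm φ N f ((s : ℝ) • x) m z = s * latticeExtTerm φ N f x (m * s) z := by
    rw [latticeExtTerm, latticeExtTerm, PNat.mul_coe, Nat.cast_mul, smul_smul]
    field_simp
  refine le_antisymm ?_ (le_latticeExt fun m z => ?_)
  · rw [← div_le_iff₀' hs]
    refine le_latticeExt fun m z => ?_
    rw [div_le_iff₀' hs, ← hterm_smul]
    exact latticeExt_le hf _ _ _
  · rw [hterm_mul]
    exact mul_le_mul_of_nonneg_left (latticeExt_le hf _ _ _) hs.le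

theorem latticeExt_intCast_smul (k : ℤ) (x : V) :
    latticeExt φ N f ((k : ℝ) • x) = |(k : ℝ)| * latticeExt φ N f x := by
  have hnat (s : ℕ) : latticeExt φ N f ((s : ℝ) • x) = s * latticeExt φ N f x := by
    cases s with
    | zero => simp [latticeExt_zero hf]
    | succ s => exact latticeExt_pnat_smul hf s.succPNat x
  obtain ⟨s, rfl | rfl⟩ := k.eq_nat_or_neg
  · rw [Int.cast_natCast, Nat.abs_cast, hnat]
  · rw [Int.cast_neg, Int.cast_natCast, abs_neg, Nat.abs_cast, neg_smul, latticeExt_neg hf, hnat]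

theorem latticeExt_smul (a : ℝ) (x : V) : latticeExt φ N f (a • x) = |a| * latticeExt φ N f x :=
  apply_smul_eq_abs_mul_of_intCast_smul (latticeExt_intCast_smul hf)
    (continuous_latticeExt_smul hf) a x

theorem IsIntSeminorm.exists_seminorm_extension (hfN : ∀ z, f z ≤ N (φ z)) :
    ∃ p : Seminorm ℝ V, ∀ z, p (φ z) = f z :=
  ⟨Seminorm.of (latticeExt φ N f) (latticeExt_add_le hf)
    (fun a x => by rw [latticeExt_smul hf, Real.norm_eq_abs]), latticeExt_apply hf hfN⟩

end Extension

theorem IsIntSeminorm.le_sum_abs_mul {ι : Type*} [Fintype ι] [DecidableEq ι] {f : (ι → ℤ) → ℝ}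
    (hf : IsIntSeminorm f) (z : ι → ℤ) : f z ≤ ∑ i, |(z i : ℝ)| * f (Pi.single i 1) := by
  calc f z = f (∑ i, z i • Pi.single i 1) := by rw [← pi_eq_sum_univ' z]
    _ ≤ ∑ i, f (z i • Pi.single i 1) :=
        Finset.le_sum_of_subadditive f hf.map_zero.le hf.map_add_le _ _
    _ = ∑ i, |(z i : ℝ)| * f (Pi.single i 1) := by simp only [hf.map_zsmul]

theorem IsIntSeminorm.exists_le_seminorm {ι : Type*} [Fintype ι] {f : (ι → ℤ) → ℝ}
    (hf : IsIntSeminorm f) : ∃ N : Seminorm ℝ (ι → ℝ), ∀ z, f z ≤ N (fun i => (z i : ℝ)) := by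
  classical
  let C : NNReal := ⟨∑ i, f (Pi.single i 1), Finset.sum_nonneg fun i _ => hf.nonneg _⟩
  refine ⟨C • normSeminorm ℝ (ι → ℝ), fun z => ?_⟩
  calc f z ≤ ∑ i, |(z i : ℝ)| * f (Pi.single i 1) := hf.le_sum_abs_mul z
    _ ≤ ∑ i, ‖fun i => (z i : ℝ)‖ * f (Pi.single i 1) := by
        gcongr with i
        · exact hf.nonneg _
        · exact norm_le_pi_norm (fun i => (z i : ℝ)) i
    _ = (C • normSeminorm ℝ (ι → ℝ)) (fun i => (z i : ℝ)) := by
        rw [← Finset.mul_sum, smul_apply, coe_normSeminorm, NNReal.smul_def, smul_eq_mul, mul_comm]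
        rfl

theorem thurston_norm_extends_general (n : ℕ) (f : (Fin n → ℤ) → ℤ)
    (hhom : ∀ (k : ℤ) (x : Fin n → ℤ), f (k • x) = |k| * f x)
    (hsub : ∀ x y : Fin n → ℤ, f (x + y) ≤ f x + f y) :
    ∃ p : (Fin n → ℝ) → ℝ,
      (∀ (a : ℝ) (x : Fin n → ℝ), p (a • x) = |a| * p x) ∧
      (∀ x y : Fin n → ℝ, p (x + y) ≤ p x + p y) ∧
      (∀ x : Fin n → ℤ, p (fun i => (x i : ℝ)) = (f x : ℝ)) := by
  have hf : IsIntSeminorm fun z => (f z : ℝ) :=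
    ⟨fun k z => by rw [hhom, Int.cast_mul, Int.cast_abs], fun z w => by exact_mod_cast hsub z w⟩
  obtain ⟨N, hN⟩ := hf.exists_le_seminorm
  obtain ⟨p, hp⟩ := hf.exists_seminorm_extension (φ := (Int.castAddHom ℝ).compLeft (Fin n)) hN
  exact ⟨p, fun a x => by rw [map_smul_eq_mul, Real.norm_eq_abs], map_add_le_add p, hp⟩

/-- An integer-valued, homogeneous and subadditive function on the lattice `ℤⁿ`
extends to a seminorm on `ℝⁿ`. -/
theorem thurston_norm_extends (n : ℕ) (hn : 0 < n) (f : (Fin n → ℤ) → ℤ)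
    (hhom : ∀ (k : ℤ) (x : Fin n → ℤ), f (k • x) = |k| * f x)
    (hsub : ∀ x y : Fin n → ℤ, f (x + y) ≤ f x + f y) :
    ∃ p : (Fin n → ℝ) → ℝ,
      (∀ (a : ℝ) (x : Fin n → ℝ), p (a • x) = |a| * p x) ∧
      (∀ x y : Fin n → ℝ, p (x + y) ≤ p x + p y) ∧
      (∀ x : Fin n → ℤ, p (fun i => (x i : ℝ)) = (f x : ℝ)) :=
  thurston_norm_extends_general n f hhom hsub
end

section
/- Let n be a positive integer and let p be a seminorm on ℝⁿ such that p(x) is an integer for every x ∈ ℤⁿ. Then the zero set p⁻¹({0}) = {φ ∈ ℝⁿ : p(φ) = 0} equals the ℝ-linear span of the set {x ∈ ℤⁿ : p(x) = 0} of lattice points on which p vanishes. -/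
/-!
If `p φ = 0`, simultaneous Dirichlet approximation (two of the fractional parts of the `m • φ`
are close, as they lie in the compact cube `[0,1]^n`) gives `q ≥ 1` and a lattice point `x`
with `q • φ - x` arbitrarily small. Since `p` is continuous and vanishes at `q • φ`, `p x` is
then `< 1`, hence `0` by integrality, so `φ` is a limit of the points `q⁻¹ • x` of the span of
the lattice zeros. That span is finite-dimensional, hence closed.
-/

open Filter Topology

theorem exists_nat_smul_sub_intCast_mem {ι : Type*} [Fintype ι] (φ : ι → ℝ)
    {U : Set (ι → ℝ)} (hU : U ∈ 𝓝 0) :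
    ∃ q : ℕ, 0 < q ∧ ∃ x : ι → ℤ, (q : ℝ) • φ - (fun i => (x i : ℝ)) ∈ U := by
  set u : ℕ → ι → ℝ := fun m i => Int.fract ((m : ℝ) * φ i)
  have hu : ∀ m, u m ∈ Set.univ.pi fun _ => Set.Icc 0 1 := fun m =>
    Set.mem_univ_pi.2 fun i => ⟨Int.fract_nonneg _, (Int.fract_lt_one _).le⟩
  obtain ⟨a, -, σ, hσ, hlim⟩ := (isCompact_univ_pi fun _ => isCompact_Icc).tendsto_subseq hu
  have hgap : Tendsto (fun k => u (σ (k + 1)) - u (σ k)) atTop (𝓝 0) := by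
    simpa using (hlim.comp (tendsto_add_atTop_nat 1)).sub hlim
  obtain ⟨k, hk⟩ := (hgap.eventually_mem hU).exists
  have hlt : σ k < σ (k + 1) := hσ k.lt_succ_self
  refine ⟨σ (k + 1) - σ k, Nat.sub_pos_of_lt hlt,
    fun i => ⌊(σ (k + 1) : ℝ) * φ i⌋ - ⌊(σ k : ℝ) * φ i⌋, ?_⟩
  convert hk using 1
  ext i
  simp only [Pi.sub_apply, Pi.smul_apply, smul_eq_mul, u, ← Int.self_sub_floor,
    Nat.cast_sub hlt.le, Int.cast_sub]
  ring

namespace Seminorm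

section Kernel

variable {𝕜 E : Type*} [SeminormedRing 𝕜] [AddCommGroup E] [Module 𝕜 E]

def ker (p : Seminorm 𝕜 E) : Submodule 𝕜 E where
  carrier := {x | p x = 0}
  zero_mem' := map_zero p
  add_mem' {x y} hx hy :=
    le_antisymm ((map_add_le_add p x y).trans_eq (by rw [hx, hy, add_zero])) (apply_nonneg p _)
  smul_mem' a x hx := show p (a • x) = 0 by rw [map_smul_eq_mul, hx, mul_zero]

end Kernel

variable {ι : Type*} [Fintype ι]

def latticeZeros (p : Seminorm ℝ (ι → ℝ)) : Set (ι → ℝ) :=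
  {φ | (∃ x : ι → ℤ, φ = fun i => (x i : ℝ)) ∧ p φ = 0}

theorem mem_span_latticeZeros (p : Seminorm ℝ (ι → ℝ))
    (hint : ∀ x : ι → ℤ, ∃ m : ℤ, p (fun i => (x i : ℝ)) = m) {φ : ι → ℝ} (hφ : p φ = 0) :
    φ ∈ Submodule.span ℝ p.latticeZeros := by
  have hcont : Continuous p := continuousOn_univ.mp (p.convexOn.continuousOn isOpen_univ)
  have hsmall : {y | p y < 1} ∈ 𝓝 (0 : ι → ℝ) :=
    (isOpen_lt hcont continuous_const).mem_nhds (by simp)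
  rw [← SetLike.mem_coe,
    ← (Submodule.span ℝ p.latticeZeros).closed_of_finiteDimensional.closure_eq,
    Metric.mem_closure_iff]
  intro ε hε
  obtain ⟨q, hq, x, hpx, hdist⟩ :=
    exists_nat_smul_sub_intCast_mem φ (inter_mem hsmall (Metric.ball_mem_nhds 0 hε))
  set v : ι → ℝ := fun i => (x i : ℝ)
  have hv : p v = 0 := by
    obtain ⟨m, hm⟩ := hint x
    have hlt : p v < 1 := calc
      p v ≤ p ((q : ℝ) • φ) + p (v - (q : ℝ) • φ) := le_map_add_map_sub p _ _
      _ = p ((q : ℝ) • φ - v) := by rw [map_smul_eq_mul, hφ, mul_zero, zero_add, map_sub_rev]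
      _ < 1 := hpx
    have hm0 : m = 0 := by
      have h0 : 0 ≤ m := by exact_mod_cast hm ▸ apply_nonneg p v
      have h1 : m < 1 := by exact_mod_cast hm ▸ hlt
      omega
    rw [hm, hm0, Int.cast_zero]
  have hq' : (1 : ℝ) ≤ q := by exact_mod_cast hq
  refine ⟨(q : ℝ)⁻¹ • v, Submodule.smul_mem _ _ (Submodule.subset_span ⟨⟨x, rfl⟩, hv⟩), ?_⟩
  calc dist φ ((q : ℝ)⁻¹ • v) = (q : ℝ)⁻¹ * ‖(q : ℝ) • φ - v‖ := by
        rw [dist_eq_norm, ← norm_smul_of_nonneg (by positivity), smul_sub,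
          inv_smul_smul₀ (by positivity)]
    _ ≤ ‖(q : ℝ) • φ - v‖ := mul_le_of_le_one_left (norm_nonneg _) (inv_le_one_of_one_le₀ hq')
    _ < ε := mem_ball_zero_iff.mp hdist

theorem ker_eq_span_latticeZeros (p : Seminorm ℝ (ι → ℝ))
    (hint : ∀ x : ι → ℤ, ∃ m : ℤ, p (fun i => (x i : ℝ)) = m) :
    p.ker = Submodule.span ℝ p.latticeZeros :=
  le_antisymm (fun _ hφ => p.mem_span_latticeZeros hint hφ)
    (Submodule.span_le.2 fun _ hφ => hφ.2)

end Seminorm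

theorem seminorm_zero_set_eq_span_lattice_general (n : ℕ)
    (p : (Fin n → ℝ) → ℝ)
    (hp1 : ∀ (a : ℝ) (x : Fin n → ℝ), p (a • x) = |a| * p x)
    (hp2 : ∀ x y : Fin n → ℝ, p (x + y) ≤ p x + p y)
    (hint : ∀ x : Fin n → ℤ, ∃ m : ℤ, p (fun i => (x i : ℝ)) = (m : ℝ)) :
    {φ : Fin n → ℝ | p φ = 0} =
      ↑(Submodule.span ℝ
        {φ : Fin n → ℝ | (∃ x : Fin n → ℤ, φ = fun i => (x i : ℝ)) ∧ p φ = 0}) :=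
  congrArg SetLike.coe ((Seminorm.of p hp2 hp1).ker_eq_span_latticeZeros hint)

/-- For a seminorm on `ℝⁿ` that is integer-valued on the lattice `ℤⁿ`,
the zero set of the seminorm is the real span of the lattice points on which
the seminorm vanishes. -/
theorem seminorm_zero_set_eq_span_lattice (n : ℕ) (hn : 0 < n)
    (p : (Fin n → ℝ) → ℝ)
    (hp1 : ∀ (a : ℝ) (x : Fin n → ℝ), p (a • x) = |a| * p x)
    (hp2 : ∀ x y : Fin n → ℝ, p (x + y) ≤ p x + p y)
    (hint : ∀ x : Fin n → ℤ, ∃ m : ℤ, p (fun i => (x i : ℝ)) = (m : ℝ)) :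
    {φ : Fin n → ℝ | p φ = 0} =
      ↑(Submodule.span ℝ
        {φ : Fin n → ℝ | (∃ x : Fin n → ℤ, φ = fun i => (x i : ℝ)) ∧ p φ = 0}) :=
  seminorm_zero_set_eq_span_lattice_general n p hp1 hp2 hint
end

section
/- Let n be a positive integer and let p be a seminorm on ℝⁿ such that p(x) is an integer for every x ∈ ℤⁿ. Then there exist finitely many lattice points α₁, …, α_k ∈ ℤⁿ such that {φ ∈ ℝⁿ : p(φ) ≤ 1} = {φ ∈ ℝⁿ : |⟨φ, α_i⟩| ≤ 1 for all 1 ≤ i ≤ k}, where ⟨·,·⟩ denotes the standard inner product on ℝⁿ. -/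
/-!
The restriction `P` of `p` to `ℤⁿ` is subadditive, `ℕ`-homogeneous and `ℤ`-valued. A discrete
Hahn–Banach argument gives, for every lattice point `x`, an integral functional `β ≤ P` with
`β x = P x`: the operation `Q ↦ (y ↦ min_k (Q (k • v + y) - k * Q v))` keeps `Q` sublinear and
`ℤ`-valued, lowers it, keeps the values at points where `Q` is already linear, and makes it linear
along `v`; applying it at `x` and then along generators of `ℤⁿ` yields an additive functional.
The integral functionals below `p` lie in a bounded box, so there are finitely many, and
`p = max_β ⟪·, β⟫` holds on `ℤⁿ`, hence on `ℝⁿ` by homogeneity and continuity.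
-/

open Filter Topology Set

structure IsSublinear {M : Type*} [AddCommGroup M] (Q : M → ℤ) : Prop where
  map_add_le : ∀ y z, Q (y + z) ≤ Q y + Q z
  map_nsmul : ∀ (k : ℕ) y, Q (k • y) = k * Q y

section Sublinear

variable {M : Type*} [AddCommGroup M] {Q Q' : M → ℤ}

/-- For sublinear `Q` one always has `0 ≤ Q y + Q (-y)`, so this is the set where
`Q (-y) = -Q y`. -/
def linearitySet (Q : M → ℤ) : Set M := {y | Q y + Q (-y) ≤ 0}

theorem linearitySet_subset_of_le (hle : Q' ≤ Q) : linearitySet Q ⊆ linearitySet Q' :=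
  fun y hy => (add_le_add (hle y) (hle (-y))).trans hy

noncomputable def squeezeAlong (Q : M → ℤ) (v y : M) : ℤ := ⨅ k : ℕ, (Q (k • v + y) - k * Q v)

namespace IsSublinear

theorem map_zero (hQ : IsSublinear Q) : Q 0 = 0 := by
  simpa using hQ.map_nsmul 0 0

theorem add_map_neg_nonneg (hQ : IsSublinear Q) (y : M) : 0 ≤ Q y + Q (-y) := by
  simpa [hQ.map_zero] using hQ.map_add_le y (-y)

def linearitySubgroup (hQ : IsSublinear Q) : AddSubgroup M where
  carrier := linearitySet Q
  zero_mem' := by simp [linearitySet, hQ.map_zero]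
  add_mem' {y z} hy hz := by
    have h₁ := hQ.map_add_le y z
    have h₂ := hQ.map_add_le (-y) (-z)
    simp only [linearitySet, mem_ofPred_eq, neg_add] at *
    linarith
  neg_mem' {y} hy := by simpa [linearitySet, add_comm] using hy

theorem map_add_of_mem (hQ : IsSublinear Q) {y z : M} (hy : y ∈ linearitySet Q)
    (hz : z ∈ linearitySet Q) : Q (y + z) = Q y + Q z := by
  have h₁ := hQ.map_add_le y z
  have h₂ := hQ.add_map_neg_nonneg (y + z)
  have h₃ := hQ.map_add_le (-y) (-z)
  simp only [linearitySet, mem_ofPred_eq, neg_add] at *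
  linarith

theorem eq_of_le_of_mem_linearitySet (hQ' : IsSublinear Q') (hle : Q' ≤ Q) {y : M}
    (hy : y ∈ linearitySet Q) : Q' y = Q y := by
  have := hQ'.add_map_neg_nonneg y
  have := hle y
  have := hle (-y)
  simp only [linearitySet, mem_ofPred_eq] at hy
  linarith

theorem bddBelow_squeezeAlong (hQ : IsSublinear Q) (v y : M) :
    BddBelow (range fun k : ℕ => Q (k • v + y) - k * Q v) := by
  refine ⟨-Q (-y), ?_⟩
  rintro _ ⟨k, rfl⟩
  have := hQ.map_add_le (k • v + y) (-y)
  rw [add_neg_cancel_right, hQ.map_nsmul] at this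
  linarith

theorem squeezeAlong_le (hQ : IsSublinear Q) (v y : M) (k : ℕ) :
    squeezeAlong Q v y ≤ Q (k • v + y) - k * Q v :=
  ciInf_le (hQ.bddBelow_squeezeAlong v y) k

theorem exists_squeezeAlong_eq (hQ : IsSublinear Q) (v y : M) :
    ∃ k : ℕ, squeezeAlong Q v y = Q (k • v + y) - k * Q v :=
  (Int.csInf_mem (range_nonempty _) (hQ.bddBelow_squeezeAlong v y)).imp fun _ h => h.symm

theorem squeezeAlong_le_self (hQ : IsSublinear Q) (v : M) : squeezeAlong Q v ≤ Q := fun y => by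
  simpa using hQ.squeezeAlong_le v y 0

theorem isSublinear_squeezeAlong (hQ : IsSublinear Q) (v : M) :
    IsSublinear (squeezeAlong Q v) where
  map_add_le y z := by
    obtain ⟨k, hk⟩ := hQ.exists_squeezeAlong_eq v y
    obtain ⟨l, hl⟩ := hQ.exists_squeezeAlong_eq v z
    have h := hQ.squeezeAlong_le v (y + z) (k + l)
    have hsub := hQ.map_add_le (k • v + y) (l • v + z)
    rw [show (k + l) • v + (y + z) = (k • v + y) + (l • v + z) by module] at h
    push_cast at h
    linarith
  map_nsmul m y := by
    obtain ⟨k, hk⟩ := hQ.exists_squeezeAlong_eq v y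
    obtain ⟨l, hl⟩ := hQ.exists_squeezeAlong_eq v (m • y)
    refine le_antisymm ?_ ?_
    · have h := hQ.squeezeAlong_le v (m • y) (m * k)
      rw [mul_smul, ← smul_add, hQ.map_nsmul] at h
      rw [hk]
      push_cast at h
      linarith
    · rw [hl]
      rcases m with _ | j
      · simp [hQ.map_nsmul]
      · have h := hQ.squeezeAlong_le v y l
        have hsub := hQ.map_add_le (l • v + (j + 1) • y) ((j * l) • v)
        rw [show l • v + (j + 1) • y + (j * l) • v = (j + 1) • (l • v + y) by module, hQ.map_nsmul,
          hQ.map_nsmul] at hsub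
        push_cast at hsub ⊢
        nlinarith

theorem squeezeAlong_self (hQ : IsSublinear Q) (v : M) : squeezeAlong Q v v = Q v := by
  obtain ⟨k, hk⟩ := hQ.exists_squeezeAlong_eq v v
  rw [← succ_nsmul, hQ.map_nsmul] at hk
  push_cast at hk
  linarith

theorem mem_linearitySet_squeezeAlong (hQ : IsSublinear Q) (v : M) :
    v ∈ linearitySet (squeezeAlong Q v) := by
  have h := hQ.squeezeAlong_le v (-v) 1
  rw [one_smul, add_neg_cancel, hQ.map_zero] at h
  simp only [linearitySet, mem_ofPred_eq, hQ.squeezeAlong_self]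
  push_cast at h
  linarith

theorem exists_le_subset_linearitySet (hQ : IsSublinear Q) (s : Finset M) :
    ∃ Q', IsSublinear Q' ∧ Q' ≤ Q ∧ ↑s ⊆ linearitySet Q' := by
  classical
  induction s using Finset.induction_on with
  | empty => exact ⟨Q, hQ, le_rfl, by simp⟩
  | insert v s _ ih =>
    obtain ⟨Q', hQ', hle, hs⟩ := ih
    refine ⟨squeezeAlong Q' v, hQ'.isSublinear_squeezeAlong v,
      (hQ'.squeezeAlong_le_self v).trans hle, ?_⟩
    rw [Finset.coe_insert, insert_subset_iff]
    exact ⟨hQ'.mem_linearitySet_squeezeAlong v,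
      hs.trans (linearitySet_subset_of_le (hQ'.squeezeAlong_le_self v))⟩

theorem exists_addMonoidHom_le_eq [AddGroup.FG M] (hQ : IsSublinear Q) (x : M) :
    ∃ f : M →+ ℤ, (∀ y, f y ≤ Q y) ∧ f x = Q x := by
  obtain ⟨s, hs⟩ := AddGroup.fg_def.mp ‹_›
  have hQx := hQ.isSublinear_squeezeAlong x
  obtain ⟨Q', hQ', hle, hsQ'⟩ := hQx.exists_le_subset_linearitySet s
  have hlin : ∀ y, y ∈ linearitySet Q' := fun y =>
    (AddSubgroup.closure_le (K := hQ'.linearitySubgroup)).mpr hsQ' (hs ▸ AddSubgroup.mem_top y)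
  refine ⟨AddMonoidHom.mk' Q' fun y z => hQ'.map_add_of_mem (hlin y) (hlin z),
    fun y => (hle y).trans (hQ.squeezeAlong_le_self x y), ?_⟩
  rw [AddMonoidHom.mk'_apply, hQ'.eq_of_le_of_mem_linearitySet hle
    (hQ.mem_linearitySet_squeezeAlong x), hQ.squeezeAlong_self]

end IsSublinear

end Sublinear

theorem AddMonoidHom.apply_eq_dotProduct {ι : Type*} [Fintype ι] [DecidableEq ι]
    (f : (ι → ℤ) →+ ℤ) (y : ι → ℤ) : f y = y ⬝ᵥ fun i => f (Pi.single i 1) := by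
  conv_lhs => rw [← Finset.univ_sum_single y]
  simp only [map_sum, dotProduct]
  refine Finset.sum_congr rfl fun i _ => ?_
  rw [← smul_eq_mul, ← map_zsmul, ← Pi.single_smul, smul_eq_mul, mul_one]

theorem tendsto_inv_natCast_mul_floor (x : ℝ) :
    Tendsto (fun m : ℕ => (m : ℝ)⁻¹ * ⌊m * x⌋) atTop (𝓝 x) := by
  have hlow : Tendsto (fun m : ℕ => x - (m : ℝ)⁻¹) atTop (𝓝 x) := by
    simpa using tendsto_const_nhds.sub (tendsto_inv_atTop_nhds_zero_nat (𝕜 := ℝ))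
  have hbounds : ∀ᶠ m : ℕ in atTop,
      x - (m : ℝ)⁻¹ ≤ (m : ℝ)⁻¹ * ⌊m * x⌋ ∧ (m : ℝ)⁻¹ * ⌊m * x⌋ ≤ x := by
    filter_upwards [eventually_gt_atTop 0] with m hm
    have hm' : (0 : ℝ) < m := Nat.cast_pos.mpr hm
    rw [le_inv_mul_iff₀ hm', mul_sub, mul_inv_cancel₀ hm'.ne', inv_mul_le_iff₀ hm']
    exact ⟨(Int.sub_one_lt_floor _).le, Int.floor_le _⟩
  exact tendsto_of_tendsto_of_tendsto_of_le_of_le' hlow tendsto_const_nhds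
    (hbounds.mono fun _ h => h.1) (hbounds.mono fun _ h => h.2)

theorem mem_of_isClosed_of_smul_mem_of_intCast_mem {ι : Type*} {C : Set (ι → ℝ)}
    (hC : IsClosed C) (hsmul : ∀ t : ℝ, 0 < t → ∀ φ ∈ C, t • φ ∈ C)
    (hlattice : ∀ y : ι → ℤ, Int.cast ∘ y ∈ C) (φ : ι → ℝ) : φ ∈ C := by
  refine hC.mem_of_tendsto (tendsto_pi_nhds.mpr fun i => tendsto_inv_natCast_mul_floor (φ i)) ?_
  filter_upwards [eventually_gt_atTop 0] with m hm
  exact hsmul _ (by positivity) _ (hlattice fun i => ⌊m * φ i⌋)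

theorem Seminorm.continuous_of_finiteDimensional {E : Type*} [NormedAddCommGroup E]
    [NormedSpace ℝ E] [FiniteDimensional ℝ E] (p : Seminorm ℝ E) : Continuous p :=
  p.convexOn.locallyLipschitz.continuous

namespace Seminorm

variable {ι : Type*} (p : Seminorm ℝ (ι → ℝ))

theorem isSublinear_of_forall_intCast_eq {P : (ι → ℤ) → ℤ}
    (hP : ∀ y, p (Int.cast ∘ y) = P y) : IsSublinear P where
  map_add_le y z := by
    have h := map_add_le_add p (Int.cast ∘ y) (Int.cast ∘ z)
    rw [show (Int.cast ∘ y + Int.cast ∘ z : ι → ℝ) = Int.cast ∘ (y + z) by ext; simp,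
      hP, hP, hP] at h
    exact_mod_cast h
  map_nsmul k y := by
    have h := map_smul_eq_mul p (k : ℝ) (Int.cast ∘ y)
    rw [show ((k : ℝ) • Int.cast ∘ y : ι → ℝ) = Int.cast ∘ (k • y) by ext; simp, hP, hP,
      Real.norm_natCast] at h
    exact_mod_cast h

variable [Fintype ι]

def integralDual : Set (ι → ℤ) := {β | ∀ φ, φ ⬝ᵥ (Int.cast ∘ β) ≤ p φ}

variable {p}

theorem abs_dotProduct_le_of_mem_integralDual {β : ι → ℤ} (hβ : β ∈ integralDual p)
    (φ : ι → ℝ) : |φ ⬝ᵥ (Int.cast ∘ β)| ≤ p φ := by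
  refine abs_le.mpr ⟨?_, hβ φ⟩
  have := hβ (-φ)
  rw [neg_dotProduct, map_neg_eq_map] at this
  linarith

variable (p) in
theorem finite_integralDual : (integralDual p).Finite := by
  classical
  let N : ι → ℤ := fun i => ⌈p (Pi.single i 1)⌉
  refine (finite_Icc (-N) N).subset fun β hβ => ?_
  have hbound : ∀ i, |(β i : ℝ)| ≤ N i := fun i => by
    simpa using (abs_dotProduct_le_of_mem_integralDual hβ (Pi.single i 1)).trans (Int.le_ceil _)
  exact ⟨fun i => neg_le_of_abs_le (mod_cast hbound i), fun i => le_of_abs_le (mod_cast hbound i)⟩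

theorem mem_integralDual_of_forall_intCast {β : ι → ℤ}
    (hβ : ∀ y : ι → ℤ, (Int.cast ∘ y) ⬝ᵥ (Int.cast ∘ β) ≤ p (Int.cast ∘ y)) :
    β ∈ integralDual p := by
  refine mem_of_isClosed_of_smul_mem_of_intCast_mem (C := {φ | φ ⬝ᵥ (Int.cast ∘ β) ≤ p φ}) ?_
    ?_ hβ
  · exact isClosed_le (by fun_prop) p.continuous_of_finiteDimensional
  · intro t ht φ hφ
    simp only [mem_ofPred_eq, smul_dotProduct, map_smul_eq_mul, Real.norm_of_nonneg ht.le,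
      smul_eq_mul] at hφ ⊢
    exact mul_le_mul_of_nonneg_left hφ ht.le

theorem exists_mem_integralDual_le (hint : ∀ y : ι → ℤ, ∃ m : ℤ, p (Int.cast ∘ y) = m)
    (φ : ι → ℝ) : ∃ β ∈ integralDual p, p φ ≤ φ ⬝ᵥ (Int.cast ∘ β) := by
  classical
  choose P hP using hint
  have hPsub := p.isSublinear_of_forall_intCast_eq hP
  suffices φ ∈ ⋃ β ∈ integralDual p, {φ | p φ ≤ φ ⬝ᵥ (Int.cast ∘ β)} by simpa using this
  refine mem_of_isClosed_of_smul_mem_of_intCast_mem ?_ ?_ (fun y => ?_) φ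
  · exact (finite_integralDual p).isClosed_biUnion fun β _ =>
      isClosed_le p.continuous_of_finiteDimensional (by fun_prop)
  · intro t ht φ hφ
    simp only [mem_iUnion, mem_ofPred_eq, smul_dotProduct, map_smul_eq_mul,
      Real.norm_of_nonneg ht.le, smul_eq_mul] at hφ ⊢
    obtain ⟨β, hβ, hle⟩ := hφ
    exact ⟨β, hβ, mul_le_mul_of_nonneg_left hle ht.le⟩
  · obtain ⟨f, hfP, hfy⟩ := hPsub.exists_addMonoidHom_le_eq y
    let β : ι → ℤ := fun i => f (Pi.single i 1)
    have hcast : ∀ z : ι → ℤ, (Int.cast ∘ z) ⬝ᵥ (Int.cast ∘ β) = (f z : ℝ) := fun z => by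
      rw [f.apply_eq_dotProduct z]
      push_cast [dotProduct]
      rfl
    refine mem_iUnion₂.mpr ⟨β, mem_integralDual_of_forall_intCast fun z => ?_, ?_⟩
    · rw [hcast, hP]
      exact_mod_cast hfP z
    · rw [mem_ofPred_eq, hcast, hP, hfy]

theorem setOf_le_one_eq_forall_integralDual
    (hint : ∀ y : ι → ℤ, ∃ m : ℤ, p (Int.cast ∘ y) = m) :
    {φ | p φ ≤ 1} = {φ | ∀ β ∈ integralDual p, |φ ⬝ᵥ (Int.cast ∘ β)| ≤ 1} := by
  ext φ
  refine ⟨fun hφ β hβ => (abs_dotProduct_le_of_mem_integralDual hβ φ).trans hφ, fun hφ => ?_⟩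
  obtain ⟨β, hβ, hle⟩ := exists_mem_integralDual_le hint φ
  exact hle.trans ((le_abs_self _).trans (hφ β hβ))

end Seminorm

theorem seminorm_unit_ball_integral_inequalities_general (n : ℕ)
    (p : (Fin n → ℝ) → ℝ)
    (hp1 : ∀ (a : ℝ) (x : Fin n → ℝ), p (a • x) = |a| * p x)
    (hp2 : ∀ x y : Fin n → ℝ, p (x + y) ≤ p x + p y)
    (hint : ∀ x : Fin n → ℤ, ∃ m : ℤ, p (fun i => (x i : ℝ)) = (m : ℝ)) :
    ∃ (k : ℕ) (α : Fin k → Fin n → ℤ),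
      {φ : Fin n → ℝ | p φ ≤ 1} =
        {φ : Fin n → ℝ | ∀ i : Fin k, |∑ j, φ j * (α i j : ℝ)| ≤ 1} := by
  let q : Seminorm ℝ (Fin n → ℝ) := .of p hp2 fun a x => by rw [hp1, Real.norm_eq_abs]
  obtain ⟨k, α, hα⟩ := q.finite_integralDual.fin_embedding
  refine ⟨k, α, ?_⟩
  have hball := q.setOf_le_one_eq_forall_integralDual hint
  rw [← hα] at hball
  simp only [forall_mem_range] at hball
  exact hball

/-- The unit ball of a seminorm on `ℝⁿ` that is integer-valued on the lattice `ℤⁿ`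
is cut out by finitely many integral linear inequalities. -/
theorem seminorm_unit_ball_integral_inequalities (n : ℕ) (hn : 0 < n)
    (p : (Fin n → ℝ) → ℝ)
    (hp1 : ∀ (a : ℝ) (x : Fin n → ℝ), p (a • x) = |a| * p x)
    (hp2 : ∀ x y : Fin n → ℝ, p (x + y) ≤ p x + p y)
    (hint : ∀ x : Fin n → ℤ, ∃ m : ℤ, p (fun i => (x i : ℝ)) = (m : ℝ)) :
    ∃ (k : ℕ) (α : Fin k → Fin n → ℤ),
      {φ : Fin n → ℝ | p φ ≤ 1} =
        {φ : Fin n → ℝ | ∀ i : Fin k, |∑ j, φ j * (α i j : ℝ)| ≤ 1} :=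
  seminorm_unit_ball_integral_inequalities_general n p hp1 hp2 hint
end

section
/- Let n be a positive integer and let p be a seminorm on ℝⁿ such that p(x) is an integer for every x ∈ ℤⁿ. Let B = {φ ∈ ℝⁿ : p(φ) ≤ 1} and let B* = {α ∈ ℝⁿ : ⟨φ, α⟩ ≤ 1 for all φ ∈ B} be its polar set, where ⟨·,·⟩ denotes the standard inner product on ℝⁿ. Then there exists a finite subset F ⊆ ℤⁿ such that B* equals the convex hull of F; in particular B* is a convex polytope with vertices at lattice points. -/
/-!
Write `B*` as `{α | ⟨x, α⟩ ≤ p x for all x}` and let `S` be its (finite) set of lattice points.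
If some `α ∈ B*` were not in `conv S`, the functionals separating `α` strictly from `S` would
form a nonempty open cone, which contains a lattice point `ψ`. This is impossible once
`p ψ = ⟨ψ, v⟩` for some `v ∈ S`, i.e. once the integral Hahn–Banach theorem holds: on `ℤⁿ`, `p` is
an integer-valued sublinear function `g`, and replacing `g` by `y ↦ min_k (g (k ψ + y) - k g ψ)`
keeps it sublinear and below `g`, fixes `g ψ`, and makes it additive along `ψ` and along every
direction where `g` already was. Straightening along `ψ` and then along generators of `ℤⁿ` leaves
an additive `v ≤ g` with `v ψ = g ψ`. Finally `⟨·, v⟩ ≤ p` extends from `ℤⁿ` to `ℝⁿ`, since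
`{x | p x < ⟨x, v⟩}` is again an open cone.
-/

open Filter

variable {G : Type*} [AddCommGroup G]

structure IsIntSublinear (g : G → ℤ) : Prop where
  map_add_le : ∀ x y, g (x + y) ≤ g x + g y
  map_nsmul : ∀ (m : ℕ) x, g (m • x) = m * g x

def IsAdditiveAt (g : G → ℤ) (u : G) : Prop := ∀ y, g (y + u) = g y + g u

theorem IsAdditiveAt.map_neg {g : G → ℤ} {u : G} (hu : IsAdditiveAt g u) (h0 : g 0 = 0) :
    g (-u) = -g u := by
  have := hu (-u)
  rw [neg_add_cancel, h0] at this
  omega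

def straightenSeq (g : G → ℤ) (ψ y : G) (k : ℕ) : ℤ := g (k • ψ + y) - k * g ψ

noncomputable def straighten (g : G → ℤ) (ψ y : G) : ℤ := ⨅ k, straightenSeq g ψ y k

theorem straightenSeq_add_self (g : G → ℤ) (ψ y : G) (k : ℕ) :
    straightenSeq g ψ (y + ψ) k = straightenSeq g ψ y (k + 1) + g ψ := by
  simp only [straightenSeq, succ_nsmul, add_right_comm _ ψ, add_assoc]
  push_cast
  ring

theorem IsAdditiveAt.straightenSeq_add {g : G → ℤ} {u : G} (hu : IsAdditiveAt g u) (ψ y : G)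
    (k : ℕ) : straightenSeq g ψ (y + u) k = straightenSeq g ψ y k + g u := by
  simp only [straightenSeq, ← add_assoc, hu _]
  ring

namespace IsIntSublinear

variable {g : G → ℤ} (hg : IsIntSublinear g)
include hg

theorem map_zero : g 0 = 0 := by simpa using hg.map_nsmul 0 0

theorem isAdditiveAt_of_mem_closure {s : Set G} (hs : ∀ u ∈ s, IsAdditiveAt g u) {u : G}
    (hu : u ∈ AddSubgroup.closure s) : IsAdditiveAt g u := by
  induction hu using AddSubgroup.closure_induction with
  | mem u hu => exact hs u hu
  | zero => intro y; simp [hg.map_zero]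
  | add u w _ _ hu hw => intro y; rw [← add_assoc, hw, hu, hw u, add_assoc]
  | neg u _ hu =>
    intro y
    have := hu (y + -u)
    rw [neg_add_cancel_right] at this
    rw [hu.map_neg hg.map_zero]
    omega

theorem eq_of_le_of_isAdditiveAt {g' : G → ℤ} (hg' : IsIntSublinear g') (hle : ∀ y, g' y ≤ g y)
    {u : G} (hu : IsAdditiveAt g u) : g' u = g u := by
  have h := hg'.map_add_le u (-u)
  rw [add_neg_cancel, hg'.map_zero] at h
  have := hle (-u)
  rw [hu.map_neg hg.map_zero] at this
  linarith [hle u]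

theorem antitone_straightenSeq (ψ y : G) : Antitone (straightenSeq g ψ y) := by
  refine antitone_nat_of_succ_le fun k => ?_
  have h := hg.map_add_le (k • ψ + y) ψ
  rw [add_right_comm, ← succ_nsmul] at h
  simp only [straightenSeq]
  push_cast
  linarith

theorem bddBelow_range_straightenSeq (ψ y : G) : BddBelow (Set.range (straightenSeq g ψ y)) := by
  refine ⟨-g (-y), ?_⟩
  rintro _ ⟨k, rfl⟩
  have h := hg.map_add_le (k • ψ + y) (-y)
  rw [add_neg_cancel_right, hg.map_nsmul] at h
  simp only [straightenSeq]
  linarith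

theorem straighten_le_straightenSeq (ψ y : G) (k : ℕ) :
    straighten g ψ y ≤ straightenSeq g ψ y k :=
  ciInf_le (hg.bddBelow_range_straightenSeq ψ y) k

theorem straighten_le (ψ y : G) : straighten g ψ y ≤ g y := by
  simpa [straightenSeq] using hg.straighten_le_straightenSeq ψ y 0

theorem eventually_straightenSeq_eq (ψ y : G) :
    ∀ᶠ k in atTop, straightenSeq g ψ y k = straighten g ψ y := by
  obtain ⟨K, hK⟩ := Int.csInf_mem (Set.range_nonempty _) (hg.bddBelow_range_straightenSeq ψ y)
  filter_upwards [eventually_ge_atTop K] with k hk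
  exact le_antisymm ((hg.antitone_straightenSeq ψ y hk).trans hK.le)
    (hg.straighten_le_straightenSeq ψ y k)

theorem straightenSeq_add_le (ψ x y : G) (k : ℕ) :
    straightenSeq g ψ (x + y) (k + k) ≤ straightenSeq g ψ x k + straightenSeq g ψ y k := by
  have h := hg.map_add_le (k • ψ + x) (k • ψ + y)
  rw [add_add_add_comm, ← add_nsmul] at h
  simp only [straightenSeq]
  push_cast
  linarith

theorem straightenSeq_nsmul (ψ y : G) (m k : ℕ) :
    straightenSeq g ψ (m • y) (m * k) = m * straightenSeq g ψ y k := by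
  simp only [straightenSeq, mul_nsmul', ← nsmul_add, hg.map_nsmul]
  push_cast
  ring

theorem straighten_zero (ψ : G) : straighten g ψ 0 = 0 := by
  simp [straighten, straightenSeq, hg.map_nsmul]

theorem straighten_self (ψ : G) : straighten g ψ ψ = g ψ := by
  have h : ∀ k, straightenSeq g ψ ψ k = g ψ := fun k => by
    simp only [straightenSeq, ← succ_nsmul, hg.map_nsmul]
    push_cast
    ring
  simp [straighten, h]

theorem isIntSublinear_straighten (ψ : G) : IsIntSublinear (straighten g ψ) where
  map_add_le x y := by
    obtain ⟨k, hx, hy, hxy⟩ := ((hg.eventually_straightenSeq_eq ψ x).and <|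
      (hg.eventually_straightenSeq_eq ψ y).and <| (tendsto_id.atTop_add_atTop tendsto_id).eventually
        (hg.eventually_straightenSeq_eq ψ (x + y))).exists
    rw [← hx, ← hy, ← hxy]
    exact hg.straightenSeq_add_le ψ x y k
  map_nsmul m y := by
    rcases Nat.eq_zero_or_pos m with rfl | hm
    · simp [hg.straighten_zero]
    obtain ⟨k, hy, hmy⟩ := ((hg.eventually_straightenSeq_eq ψ y).and <|
      (tendsto_id.const_mul_atTop' hm).eventually (hg.eventually_straightenSeq_eq ψ (m • y))).exists
    rw [← hy, ← hmy]
    exact hg.straightenSeq_nsmul ψ y m k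

theorem isAdditiveAt_straighten_self (ψ : G) : IsAdditiveAt (straighten g ψ) ψ := by
  intro y
  obtain ⟨k, hy, hyψ⟩ := ((tendsto_add_atTop_nat 1).eventually
    (hg.eventually_straightenSeq_eq ψ y)).and (hg.eventually_straightenSeq_eq ψ (y + ψ)) |>.exists
  rw [← hy, ← hyψ, hg.straighten_self, straightenSeq_add_self]

theorem isAdditiveAt_straighten {u : G} (hu : IsAdditiveAt g u) (ψ : G) :
    IsAdditiveAt (straighten g ψ) u := by
  have h : ∀ y, straighten g ψ (y + u) = straighten g ψ y + g u := fun y => by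
    obtain ⟨k, hy, hyu⟩ := ((hg.eventually_straightenSeq_eq ψ y).and
      (hg.eventually_straightenSeq_eq ψ (y + u))).exists
    rw [← hy, ← hyu, hu.straightenSeq_add]
  have hu' := h 0
  rw [zero_add, hg.straighten_zero, zero_add] at hu'
  intro y
  rw [h, hu']

theorem exists_le_isAdditiveAt (s : Finset G) :
    ∃ g' : G → ℤ, IsIntSublinear g' ∧ (∀ y, g' y ≤ g y) ∧ ∀ u ∈ s, IsAdditiveAt g' u := by
  classical
  induction s using Finset.induction with
  | empty => exact ⟨g, hg, fun _ => le_rfl, by simp⟩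
  | insert a s _ ih =>
    obtain ⟨g', hg', hle, hs⟩ := ih
    refine ⟨straighten g' a, hg'.isIntSublinear_straighten a,
      fun y => (hg'.straighten_le a y).trans (hle y), ?_⟩
    simp only [Finset.mem_insert, forall_eq_or_imp]
    exact ⟨hg'.isAdditiveAt_straighten_self a, fun u hu => hg'.isAdditiveAt_straighten (hs u hu) a⟩

theorem exists_addMonoidHom_le_eq [AddGroup.FG G] (ψ : G) :
    ∃ f : G →+ ℤ, (∀ x, f x ≤ g x) ∧ f ψ = g ψ := by
  obtain ⟨s, hs⟩ := AddGroup.fg_def.mp ‹_›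
  obtain ⟨g', hg', hle, hadd⟩ := (hg.isIntSublinear_straighten ψ).exists_le_isAdditiveAt s
  have hadd' (u : G) : IsAdditiveAt g' u :=
    hg'.isAdditiveAt_of_mem_closure hadd (hs ▸ AddSubgroup.mem_top u)
  refine ⟨AddMonoidHom.mk' g' fun x y => hadd' y x,
    fun x => (hle x).trans (hg.straighten_le ψ x), ?_⟩
  rw [AddMonoidHom.mk'_apply, (hg.isIntSublinear_straighten ψ).eq_of_le_of_isAdditiveAt hg' hle
    (hg.isAdditiveAt_straighten_self ψ), hg.straighten_self]

end IsIntSublinear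

theorem Seminorm.isIntSublinear_of_forall_intCast_eq {ι : Type*} {q : Seminorm ℝ (ι → ℝ)}
    {g : (ι → ℤ) → ℤ} (hg : ∀ z, q (Int.cast ∘ z) = g z) : IsIntSublinear g where
  map_add_le x y := by
    have hcast : (Int.cast ∘ (x + y) : ι → ℝ) = Int.cast ∘ x + Int.cast ∘ y := by ext; simp
    have := map_add_le_add q (Int.cast ∘ x) (Int.cast ∘ y)
    rw [← hcast, hg, hg, hg] at this
    exact_mod_cast this
  map_nsmul m x := by
    have hcast : (Int.cast ∘ (m • x) : ι → ℝ) = (m : ℝ) • Int.cast ∘ x := by ext; simp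
    have := map_smul_eq_mul q (m : ℝ) (Int.cast ∘ x)
    rw [← hcast, hg, hg, Real.norm_natCast] at this
    exact_mod_cast this

theorem dotProductEquiv_symm_dotProduct {R ι : Type*} [CommSemiring R] [Fintype ι] [DecidableEq ι]
    (f : Module.Dual R (ι → R)) (w : ι → R) : (dotProductEquiv R ι).symm f ⬝ᵥ w = f w := by
  conv_rhs => rw [← (dotProductEquiv R ι).apply_symm_apply f]
  rfl

variable {ι : Type*} [Fintype ι]

theorem exists_intCast_mem_of_isOpen {U : Set (ι → ℝ)} (hU : IsOpen U)
    (hsmul : ∀ t : ℝ, 0 < t → ∀ x ∈ U, t • x ∈ U) (hne : U.Nonempty) :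
    ∃ z : ι → ℤ, Int.cast ∘ z ∈ U := by
  obtain ⟨x, hx⟩ := hne
  obtain ⟨ε, hε, hball⟩ := Metric.isOpen_iff.mp hU x hx
  obtain ⟨t, ht⟩ := exists_nat_gt ε⁻¹
  have htpos : (0 : ℝ) < t := (inv_pos.2 hε).trans ht
  refine ⟨fun i => ⌊t * x i⌋, ?_⟩
  have hround : (t : ℝ)⁻¹ • (Int.cast ∘ fun i => ⌊t * x i⌋ : ι → ℝ) ∈ U := by
    refine hball ((dist_pi_lt_iff hε).2 fun i => ?_)
    have h1 := Int.floor_le (t * x i)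
    have h2 := Int.lt_floor_add_one (t * x i)
    have h3 : (t : ℝ)⁻¹ < ε := (inv_lt_comm₀ hε htpos).1 ht
    have hinv : (0 : ℝ) < (t : ℝ)⁻¹ := inv_pos.2 htpos
    have hx : x i - (t : ℝ)⁻¹ * ⌊t * x i⌋ = (t : ℝ)⁻¹ * (t * x i - ⌊t * x i⌋) := by
      field_simp
    simp only [Function.comp_apply, Pi.smul_apply, smul_eq_mul, Real.dist_eq, abs_sub_lt_iff]
    constructor
    · nlinarith
    · rw [hx]
      nlinarith
  simpa [smul_smul, htpos.ne'] using hsmul t htpos _ hround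

namespace Seminorm

variable (q : Seminorm ℝ (ι → ℝ))

def dualBall : Set (ι → ℝ) := {α | ∀ x, x ⬝ᵥ α ≤ q x}

theorem mem_dualBall_iff_forall_le_one {α : ι → ℝ} :
    α ∈ q.dualBall ↔ ∀ x, q x ≤ 1 → x ⬝ᵥ α ≤ 1 := by
  refine ⟨fun h x hx => (h x).trans hx, fun h x => ?_⟩
  by_contra! hlt
  obtain ⟨r, hqr, hrα⟩ := exists_between hlt
  have hr : 0 < r := (apply_nonneg q x).trans_lt hqr
  have := h (r⁻¹ • x) (by
    rw [map_smul_eq_mul, Real.norm_of_nonneg (inv_nonneg.2 hr.le), inv_mul_le_one₀ hr]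
    linarith)
  rw [smul_dotProduct, smul_eq_mul, inv_mul_le_one₀ hr] at this
  linarith

theorem convex_dualBall : Convex ℝ q.dualBall := by
  intro β hβ γ hγ a b ha hb hab x
  rw [dotProduct_add, dotProduct_smul, dotProduct_smul, smul_eq_mul, smul_eq_mul]
  calc a * (x ⬝ᵥ β) + b * (x ⬝ᵥ γ) ≤ a * q x + b * q x := by gcongr <;> [exact hβ x; exact hγ x]
    _ = q x := by rw [← add_mul, hab, one_mul]

theorem finite_intCast_mem_dualBall : {v : ι → ℤ | Int.cast ∘ v ∈ q.dualBall}.Finite := by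
  classical
  let c : ι → ℤ := fun i => ⌈q (Pi.single i 1)⌉
  refine (Set.finite_Icc (-c) c).subset fun v hv => ⟨fun i => ?_, fun i => ?_⟩
  · have h := hv (-Pi.single i 1)
    rw [map_neg_eq_map, neg_dotProduct, single_dotProduct, one_mul] at h
    have := Int.le_ceil (q (Pi.single i 1))
    have : (-v i : ℝ) ≤ ⌈q (Pi.single i 1)⌉ := by simpa using h.trans this
    exact neg_le.1 (by exact_mod_cast this)
  · have h := hv (Pi.single i 1)
    rw [single_dotProduct, one_mul] at h
    exact Int.cast_le.1 (h.trans (Int.le_ceil _))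

theorem mem_dualBall_of_forall_intCast {v : ι → ℝ}
    (h : ∀ z : ι → ℤ, (Int.cast ∘ z) ⬝ᵥ v ≤ q (Int.cast ∘ z)) : v ∈ q.dualBall := by
  by_contra hv
  simp only [dualBall, Set.mem_ofPred_eq, not_forall, not_le] at hv
  let U : Set (ι → ℝ) := {x | q x < x ⬝ᵥ v}
  have hU : IsOpen U :=
    isOpen_lt q.convexOn.locallyLipschitz.continuous (continuous_id.dotProduct continuous_const)
  have hUsmul : ∀ t : ℝ, 0 < t → ∀ x ∈ U, t • x ∈ U := by
    intro t ht x hx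
    simp only [U, Set.mem_ofPred_eq, map_smul_eq_mul, Real.norm_of_nonneg ht.le, smul_dotProduct,
      smul_eq_mul] at hx ⊢
    exact mul_lt_mul_of_pos_left hx ht
  obtain ⟨z, hz⟩ := exists_intCast_mem_of_isOpen hU hUsmul hv
  exact (h z).not_gt hz

variable {q}

theorem exists_intCast_mem_dualBall_dotProduct_eq
    (hint : ∀ z : ι → ℤ, ∃ m : ℤ, q (Int.cast ∘ z) = m) (ψ : ι → ℤ) :
    ∃ v : ι → ℤ,
      Int.cast ∘ v ∈ q.dualBall ∧ (Int.cast ∘ ψ) ⬝ᵥ (Int.cast ∘ v) = q (Int.cast ∘ ψ) := by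
  classical
  choose g hg using hint
  obtain ⟨f, hle, hψ⟩ := (isIntSublinear_of_forall_intCast_eq hg).exists_addMonoidHom_le_eq ψ
  set v := (dotProductEquiv ℤ ι).symm f.toIntLinearMap
  have hf (z : ι → ℤ) : (Int.cast ∘ z) ⬝ᵥ (Int.cast ∘ v : ι → ℝ) = f z := by
    rw [dotProduct_comm]
    exact (RingHom.map_dotProduct (Int.castRingHom ℝ) v z).symm.trans
      (congrArg Int.cast (dotProductEquiv_symm_dotProduct f.toIntLinearMap z))
  refine ⟨v, q.mem_dualBall_of_forall_intCast fun z => ?_, by rw [hf, hψ, hg]⟩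
  rw [hf, hg]
  exact_mod_cast hle z

theorem dualBall_eq_convexHull (hint : ∀ z : ι → ℤ, ∃ m : ℤ, q (Int.cast ∘ z) = m) :
    q.dualBall = convexHull ℝ ((Int.cast ∘ ·) '' {v : ι → ℤ | Int.cast ∘ v ∈ q.dualBall}) := by
  classical
  refine subset_antisymm (fun α hα => ?_)
    (convexHull_min (Set.image_subset_iff.2 fun v hv => hv) q.convex_dualBall)
  set S := {v : ι → ℤ | Int.cast ∘ v ∈ q.dualBall}
  have hS : S.Finite := q.finite_intCast_mem_dualBall
  by_contra hnot
  obtain ⟨f, u, hfS, hfα⟩ := geometric_hahn_banach_closed_point (convex_convexHull ℝ _)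
    ((hS.image _).isClosed_convexHull (𝕜 := ℝ)) hnot
  let U : Set (ι → ℝ) := {x | ∀ v ∈ S, x ⬝ᵥ (Int.cast ∘ v) < x ⬝ᵥ α}
  have hU : IsOpen U := by
    simp only [U, Set.ofPred_forall]
    exact hS.isOpen_biInter fun v _ =>
      isOpen_lt (continuous_id.dotProduct continuous_const)
        (continuous_id.dotProduct continuous_const)
  have hUsmul : ∀ t : ℝ, 0 < t → ∀ x ∈ U, t • x ∈ U := by
    intro t ht x hx v hv
    simp only [smul_dotProduct, smul_eq_mul]
    exact mul_lt_mul_of_pos_left (hx v hv) ht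
  have hfU : (dotProductEquiv ℝ ι).symm f.toLinearMap ∈ U := fun v hv => by
    rw [dotProductEquiv_symm_dotProduct, dotProductEquiv_symm_dotProduct]
    exact (hfS _ (subset_convexHull ℝ _ ⟨v, hv, rfl⟩)).trans hfα
  obtain ⟨ψ, hψ⟩ := exists_intCast_mem_of_isOpen hU hUsmul ⟨_, hfU⟩
  obtain ⟨v, hv, hψv⟩ := exists_intCast_mem_dualBall_dotProduct_eq hint ψ
  exact (hψ v hv).not_ge (hψv ▸ hα _)

end Seminorm

theorem dual_ball_convexHull_of_lattice_points_general (n : ℕ)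
    (p : (Fin n → ℝ) → ℝ)
    (hp1 : ∀ (a : ℝ) (x : Fin n → ℝ), p (a • x) = |a| * p x)
    (hp2 : ∀ x y : Fin n → ℝ, p (x + y) ≤ p x + p y)
    (hint : ∀ x : Fin n → ℤ, ∃ m : ℤ, p (fun i => (x i : ℝ)) = (m : ℝ)) :
    ∃ F : Finset (Fin n → ℤ),
      {α : Fin n → ℝ | ∀ φ : Fin n → ℝ, p φ ≤ 1 → ∑ j, φ j * α j ≤ 1} =
        convexHull ℝ ((fun (x : Fin n → ℤ) => fun i => (x i : ℝ)) '' ↑F) := by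
  let q : Seminorm ℝ (Fin n → ℝ) := Seminorm.of p hp2 fun a x => by rw [hp1, Real.norm_eq_abs]
  refine ⟨q.finite_intCast_mem_dualBall.toFinset, ?_⟩
  rw [Set.Finite.coe_toFinset]
  calc {α : Fin n → ℝ | ∀ φ : Fin n → ℝ, p φ ≤ 1 → ∑ j, φ j * α j ≤ 1} = q.dualBall :=
        Set.ext fun α => q.mem_dualBall_iff_forall_le_one.symm
    _ = _ := q.dualBall_eq_convexHull hint

/-- The polar set of the unit ball of a seminorm on `ℝⁿ` that is integer-valued on
the lattice `ℤⁿ` is the convex hull of a finite set of lattice points. -/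
theorem dual_ball_convexHull_of_lattice_points (n : ℕ) (hn : 0 < n)
    (p : (Fin n → ℝ) → ℝ)
    (hp1 : ∀ (a : ℝ) (x : Fin n → ℝ), p (a • x) = |a| * p x)
    (hp2 : ∀ x y : Fin n → ℝ, p (x + y) ≤ p x + p y)
    (hint : ∀ x : Fin n → ℤ, ∃ m : ℤ, p (fun i => (x i : ℝ)) = (m : ℝ)) :
    ∃ F : Finset (Fin n → ℤ),
      {α : Fin n → ℝ | ∀ φ : Fin n → ℝ, p φ ≤ 1 → ∑ j, φ j * α j ≤ 1} =
        convexHull ℝ ((fun (x : Fin n → ℤ) => fun i => (x i : ℝ)) '' ↑F) :=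
  dual_ball_convexHull_of_lattice_points_general n p hp1 hp2 hint
end
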